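/- arXiv:1305.1481 — 9 statements merged into one kernel-verified Lean document; each statement's English description precedes it below -/
import Mathlib

section
/- Hermite reduction splitting lemma: Let K be a field of characteristic zero and D a derivation on the polynomial ring K[t] mapping K into K. Let a, u, v ∈ K[t] with v nonconstant, v and Dv coprime, u and v coprime, u ≠ 0, and let m ≥ 2 be an integer. Then there exist unique polynomials r, s ∈ K[t] with deg(r) < deg(v) such that a = (1 − m)·r·u·Dv + s·v. -/
open Polynomial

/-- **Hermite reduction splitting lemma.**
Let `K` be a field of characteristic zero and `D` a derivation on `K[t]` mapping `K`
into `K`. Let `a, u, v ∈ K[t]` with `v` nonconstant, `v` and `Dv` coprime (`v` normal),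
`u` and `v` coprime, `u ≠ 0`, and let `m ≥ 2`. Then there exist unique polynomials
`r, s ∈ K[t]` with `deg r < deg v` such that `a = (1 − m)·r·u·Dv + s·v`. -/
theorem hermite_splitting_lemma
    {K : Type} [Field K] [CharZero K]
    (D : Polynomial K → Polynomial K)
    (hDadd : ∀ p q : Polynomial K, D (p + q) = D p + D q)
    (hDmul : ∀ p q : Polynomial K, D (p * q) = p * D q + q * D p)
    (hDK : ∀ c : K, ∃ c' : K, D (C c) = C c')
    (a u v : Polynomial K)
    (hv : 0 < v.degree)
    (hvnormal : IsCoprime v (D v))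
    (huv : IsCoprime u v)
    (hu : u ≠ 0)
    (m : ℕ) (hm : 2 ≤ m) :
    ∃! rs : Polynomial K × Polynomial K,
      rs.1.degree < v.degree ∧
      a = (1 - (m : Polynomial K)) * rs.1 * u * D v + rs.2 * v := by
  have hv0 : v ≠ 0 := fun h => by simp [h] at hv
  have hc : IsUnit (1 - (m : Polynomial K)) := by
    rw [← Polynomial.C_1, ← Polynomial.C_eq_natCast, ← C_sub]
    refine Polynomial.isUnit_C.mpr (isUnit_iff_ne_zero.mpr ?_)
    intro h
    have : (m : K) = 1 := (sub_eq_zero.mp h).symm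
    have : m = 1 := by exact_mod_cast this
    omega
  set w : Polynomial K := (1 - (m : Polynomial K)) * u * D v with hwdef
  have hwv : IsCoprime w v := by
    refine IsCoprime.mul_left ?_ hvnormal.symm
    exact ((isCoprime_mul_unit_left_left hc u v).mpr huv)
  clear_value w
  obtain ⟨x, y, hxy⟩ := id hwv
  refine ⟨⟨(a * x) % v, w * ((a * x) / v) + a * y⟩, ⟨?_, ?_⟩, ?_⟩
  · exact EuclideanDomain.mod_lt _ hv0
  · have h1 : a = a * x * w + a * y * v := by
      linear_combination (-a) * hxy
    have h2 : a * x = v * ((a * x) / v) + (a * x) % v := (EuclideanDomain.div_add_mod _ _).symm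
    calc a = a * x * w + a * y * v := h1
      _ = (v * ((a * x) / v) + (a * x) % v) * w + a * y * v := by rw [← h2]
      _ = (1 - (m : Polynomial K)) * ((a * x) % v) * u * D v
            + (w * ((a * x) / v) + a * y) * v := by rw [hwdef]; ring
  · rintro ⟨r, s⟩ ⟨hr, heq⟩
    have hr0 : ((a * x) % v).degree < v.degree := EuclideanDomain.mod_lt _ hv0
    have heq0 : a = (1 - (m : Polynomial K)) * ((a * x) % v) * u * D v
        + (w * ((a * x) / v) + a * y) * v := by
      have h2 : a * x = v * ((a * x) / v) + (a * x) % v := (EuclideanDomain.div_add_mod _ _).symm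
      have h1 : a = a * x * w + a * y * v := by
        linear_combination (-a) * hxy
      calc a = a * x * w + a * y * v := h1
        _ = (v * ((a * x) / v) + (a * x) % v) * w + a * y * v := by rw [← h2]
        _ = _ := by rw [hwdef]; ring
    simp only at hr heq
    have key : w * (r - (a * x) % v) = ((w * ((a * x) / v) + a * y) - s) * v := by
      linear_combination heq0 - heq + (r - (a * x) % v) * hwdef
    have hdvd : v ∣ r - (a * x) % v := by
      have hd : v ∣ w * (r - (a * x) % v) :=
        ⟨(w * ((a * x) / v) + a * y) - s, by rw [key]; ring⟩
      exact hwv.symm.dvd_of_dvd_mul_left hd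
    have hrzero : r - (a * x) % v = 0 := by
      refine Polynomial.eq_zero_of_dvd_of_degree_lt hdvd ?_
      exact lt_of_le_of_lt (Polynomial.degree_sub_le _ _) (max_lt hr hr0)
    have hreq : r = (a * x) % v := sub_eq_zero.mp hrzero
    have hseq : s = w * ((a * x) / v) + a * y := by
      have h3 : (((w * ((a * x) / v) + a * y) - s)) * v = 0 := by
        rw [← key, hrzero, mul_zero]
      have h4 := (mul_eq_zero.mp h3).resolve_right hv0
      exact (sub_eq_zero.mp h4).symm
    exact Prod.ext hreq hseq
end

section
/- Hermite reduction: Let K be a field of characteristic zero and D a derivation on the polynomial ring K[t] mapping K into K; extend D to the fraction field K(t). Let a, b ∈ K[t] with b monic, a and b coprime, and assume every nonconstant irreducible factor p of b is normal, i.e., p and Dp are coprime. Then there exist g ∈ K(t) and polynomials q, a₁, b₁ ∈ K[t] with b₁ monic, squarefree, b₁ dividing b, and deg(a₁) < deg(b₁), such that a/b = D(g) + q + a₁/b₁ in K(t). -/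
/-!
Hermite reduction lowers the multiplicity of one repeated factor at a time. If
`b = p ^ (m + 2) * c` with `p` irreducible and `p ∤ c`, normality of `p` and characteristic zero
make `p` coprime to `(m + 1) c Dp`, so `a = u (m + 1) c Dp + v p`. Since
`D(-u / p ^ (m + 1)) = (m + 1) u Dp / p ^ (m + 2) - Du / p ^ (m + 1)`, subtracting it from `a / b`
leaves `(v + c Du) / (p ^ (m + 1) c)`, a fraction whose monic denominator has smaller degree.
Once the denominator is squarefree, division with remainder yields `q` and `a₁ / b₁`.
-/

open Polynomial

def derivationOfLeibniz {A : Type*} [CommRing A] (D : A → A)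
    (hadd : ∀ f g, D (f + g) = D f + D g) (hmul : ∀ f g, D (f * g) = f * D g + g * D f) :
    Derivation ℤ A A :=
  Derivation.mk' (AddMonoidHom.mk' D hadd).toIntLinearMap hmul

theorem Derivation.div_pow_add_two_mul_eq {R F : Type*} [CommRing R] [Field F] [Algebra R F]
    (d : Derivation R F F) {P C : F} (hP : P ≠ 0) (hC : C ≠ 0) (U V : F) (m : ℕ) :
    (U * ((m + 1 : F) * C * d P) + V * P) / (P ^ (m + 2) * C) =
      d (-(U / P ^ (m + 1))) + (V + C * d U) / (P ^ (m + 1) * C) := by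
  rw [map_neg, Derivation.leibniz_div, Derivation.leibniz_pow, Nat.add_sub_cancel]
  simp only [smul_eq_mul, nsmul_eq_mul]
  push_cast
  field_simp
  ring

namespace Polynomial

variable {K : Type*} [Field K]

theorem exists_eq_pow_add_two_mul_of_not_squarefree {b : K[X]} (hb : b.Monic)
    (hsf : ¬Squarefree b) :
    ∃ (p c : K[X]) (m : ℕ), p.Monic ∧ Irreducible p ∧ c.Monic ∧ ¬p ∣ c ∧
      b = p ^ (m + 2) * c := by
  classical
  rw [squarefree_iff_no_irreducibles hb.ne_zero] at hsf
  push Not at hsf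
  obtain ⟨p₀, hp₀, hp₀b⟩ := hsf
  have hassoc : Associated (normalize p₀) p₀ := normalize_associated p₀
  set p := normalize p₀
  have hp : Irreducible p := hassoc.symm.irreducible hp₀
  have hfin : FiniteMultiplicity p b :=
    FiniteMultiplicity.of_not_isUnit hp.not_isUnit hb.ne_zero
  have hsq : p ^ 2 ∣ b := (pow_two p).symm ▸ (mul_dvd_mul hassoc.dvd hassoc.dvd).trans hp₀b
  have htwo : 2 ≤ multiplicity p b := hfin.le_multiplicity_of_pow_dvd hsq
  obtain ⟨c, hbc, hpc⟩ := hfin.exists_eq_pow_mul_and_not_dvd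
  obtain ⟨m, hm⟩ : ∃ m, multiplicity p b = m + 2 := ⟨multiplicity p b - 2, by omega⟩
  rw [hm] at hbc
  have hpm : p.Monic := monic_normalize hp₀.ne_zero
  exact ⟨p, c, m, hpm, hp, (hpm.pow _).of_mul_monic_left (hbc ▸ hb), hpc, hbc⟩

variable {R : Type*} [CommRing R] [Algebra R (RatFunc K)]

theorem exists_div_pow_add_two_mul_eq [CharZero K] (D : K[X] → K[X])
    (d : Derivation R (RatFunc K) (RatFunc K))
    (hD : ∀ f, d (algebraMap K[X] (RatFunc K) f) = algebraMap K[X] (RatFunc K) (D f))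
    {p c : K[X]} (hp : p ≠ 0) (hc : c ≠ 0) (hpc : IsCoprime p (c * D p)) (m : ℕ) (a : K[X]) :
    ∃ (g : RatFunc K) (a' : K[X]),
      algebraMap K[X] (RatFunc K) a / algebraMap K[X] (RatFunc K) (p ^ (m + 2) * c) =
        d g + algebraMap K[X] (RatFunc K) a' / algebraMap K[X] (RatFunc K) (p ^ (m + 1) * c) := by
  have hunit : IsUnit (m + 1 : K[X]) := by
    rw [← Nat.cast_succ, ← map_natCast C]
    exact isUnit_C.mpr (Nat.cast_ne_zero.mpr m.succ_ne_zero).isUnit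
  obtain ⟨v, u, huv⟩ : IsCoprime p ((m + 1 : K[X]) * c * D p) := by
    rwa [mul_assoc, isCoprime_mul_unit_left_right hunit]
  set A := algebraMap K[X] (RatFunc K)
  have ha : A a = A (a * u) * ((m + 1 : RatFunc K) * A c * d (A p)) + A (a * v) * A p := by
    rw [hD, ← map_natCast A, ← map_one A, ← map_add, ← map_mul, ← map_mul, ← map_mul,
      ← map_mul, ← map_add]
    congr 1
    linear_combination (-a) * huv
  refine ⟨-(A (a * u) / A p ^ (m + 1)), a * v + c * D (a * u), ?_⟩
  have key := d.div_pow_add_two_mul_eq (RatFunc.algebraMap_ne_zero hp)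
    (RatFunc.algebraMap_ne_zero hc) (A (a * u)) (A (a * v)) m
  rw [← ha, hD] at key
  simpa only [map_mul, map_pow, map_add] using key

def HasHermiteReduction (DF : RatFunc K → RatFunc K) (a b : K[X]) : Prop :=
  ∃ (g : RatFunc K) (q a₁ b₁ : K[X]),
    b₁.Monic ∧ Squarefree b₁ ∧ b₁ ∣ b ∧ a₁.degree < b₁.degree ∧
    algebraMap K[X] (RatFunc K) a / algebraMap K[X] (RatFunc K) b =
      DF g + algebraMap K[X] (RatFunc K) q +
        algebraMap K[X] (RatFunc K) a₁ / algebraMap K[X] (RatFunc K) b₁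

theorem hasHermiteReduction_of_squarefree (d : Derivation R (RatFunc K) (RatFunc K))
    {b : K[X]} (hb : b.Monic) (hsf : Squarefree b) (a : K[X]) :
    HasHermiteReduction d a b := by
  refine ⟨0, a /ₘ b, a %ₘ b, b, hb, hsf, dvd_rfl, degree_modByMonic_lt a hb, ?_⟩
  have hb0 : algebraMap K[X] (RatFunc K) b ≠ 0 := RatFunc.algebraMap_ne_zero hb.ne_zero
  conv_lhs => rw [← modByMonic_add_div a b]
  rw [map_zero, zero_add, map_add, map_mul]
  field_simp
  ring

theorem HasHermiteReduction.of_div_eq_add_div {d : Derivation R (RatFunc K) (RatFunc K)}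
    {a b a' b' : K[X]} (h : HasHermiteReduction d a' b') (hb' : b' ∣ b) (g₀ : RatFunc K)
    (heq : algebraMap K[X] (RatFunc K) a / algebraMap K[X] (RatFunc K) b =
      d g₀ + algebraMap K[X] (RatFunc K) a' / algebraMap K[X] (RatFunc K) b') :
    HasHermiteReduction d a b := by
  obtain ⟨g, q, a₁, b₁, hb₁, hsf, hdvd, hdeg, h'⟩ := h
  refine ⟨g₀ + g, q, a₁, b₁, hb₁, hsf, hdvd.trans hb', hdeg, ?_⟩
  rw [heq, h', map_add]
  ring

theorem hasHermiteReduction_of_normal [CharZero K] (D : K[X] → K[X])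
    (d : Derivation R (RatFunc K) (RatFunc K))
    (hD : ∀ f, d (algebraMap K[X] (RatFunc K) f) = algebraMap K[X] (RatFunc K) (D f))
    {b : K[X]} (hb : b.Monic)
    (hnormal : ∀ p : K[X], Irreducible p → 0 < p.degree → p ∣ b → IsCoprime p (D p))
    (a : K[X]) : HasHermiteReduction d a b := by
  induction hn : b.natDegree using Nat.strong_induction_on generalizing a b with
  | _ n ih =>
  by_cases hsf : Squarefree b
  · exact hasHermiteReduction_of_squarefree d hb hsf a
  obtain ⟨p, c, m, hp, hpirr, hc, hpc, rfl⟩ := exists_eq_pow_add_two_mul_of_not_squarefree hb hsf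
  have hpdeg : 0 < p.degree := degree_pos_of_irreducible hpirr
  have hnormal_p : IsCoprime p (D p) :=
    hnormal p hpirr hpdeg (dvd_mul_of_dvd_left (dvd_pow_self p (by omega)) c)
  have hcop : IsCoprime p (c * D p) :=
    ((hpirr.coprime_iff_not_dvd).mpr hpc).mul_right hnormal_p
  obtain ⟨g₀, a', heq⟩ := exists_div_pow_add_two_mul_eq D d hD hp.ne_zero hc.ne_zero hcop m a
  have hdvd : p ^ (m + 1) * c ∣ p ^ (m + 2) * c :=
    mul_dvd_mul_right (pow_dvd_pow p (by omega)) c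
  have hlt : (p ^ (m + 1) * c).natDegree < n := by
    rw [← hn, (hp.pow _).natDegree_mul hc, (hp.pow _).natDegree_mul hc, natDegree_pow,
      natDegree_pow]
    have := natDegree_pos_iff_degree_pos.mpr hpdeg
    nlinarith
  have ih' := ih _ hlt ((hp.pow _).mul hc)
    (fun q hq hqdeg hqb => hnormal q hq hqdeg (hqb.trans hdvd)) a' rfl
  exact ih'.of_div_eq_add_div hdvd g₀ heq

end Polynomial

theorem hermite_reduction_general
    {K : Type} [Field K] [CharZero K]
    (D : Polynomial K → Polynomial K)
    (DF : RatFunc K → RatFunc K)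
    (hDFadd : ∀ f g : RatFunc K, DF (f + g) = DF f + DF g)
    (hDFmul : ∀ f g : RatFunc K, DF (f * g) = f * DF g + g * DF f)
    (hDFext : ∀ p : Polynomial K,
      DF (algebraMap (Polynomial K) (RatFunc K) p) =
        algebraMap (Polynomial K) (RatFunc K) (D p))
    (a b : Polynomial K) (hb : b.Monic)
    (hnormal : ∀ p : Polynomial K, Irreducible p → 0 < p.degree → p ∣ b →
      IsCoprime p (D p)) :
    ∃ (g : RatFunc K) (q a₁ b₁ : Polynomial K),
      b₁.Monic ∧ Squarefree b₁ ∧ b₁ ∣ b ∧ a₁.degree < b₁.degree ∧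
      algebraMap (Polynomial K) (RatFunc K) a / algebraMap (Polynomial K) (RatFunc K) b =
        DF g + algebraMap (Polynomial K) (RatFunc K) q +
          algebraMap (Polynomial K) (RatFunc K) a₁ /
            algebraMap (Polynomial K) (RatFunc K) b₁ :=
  -- `RatFunc K` also inherits a `ℤ`-algebra structure from `K[X]`, not reducibly equal to the
  -- one `derivationOfLeibniz` is built on.
  letI := Ring.toIntAlgebra (RatFunc K)
  hasHermiteReduction_of_normal D (derivationOfLeibniz DF hDFadd hDFmul) hDFext hb hnormal a

/-- **Hermite reduction.**
Let `K` be a field of characteristic zero and `D` a derivation on `K[t]` mapping `K`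
into `K`, extended to a derivation `DF` on the fraction field `K(t)` (modeled as
`RatFunc K`). Let `a, b ∈ K[t]` with `b` monic, `a` and `b` coprime, and every
nonconstant irreducible factor `p` of `b` normal (i.e. `p` and `Dp` coprime). Then
there exist `g ∈ K(t)` and polynomials `q, a₁, b₁ ∈ K[t]` with `b₁` monic, squarefree,
`b₁ ∣ b` and `deg a₁ < deg b₁` such that `a/b = DF g + q + a₁/b₁` in `K(t)`. -/
theorem hermite_reduction
    {K : Type} [Field K] [CharZero K]
    (D : Polynomial K → Polynomial K)
    (hDadd : ∀ p q : Polynomial K, D (p + q) = D p + D q)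
    (hDmul : ∀ p q : Polynomial K, D (p * q) = p * D q + q * D p)
    (hDK : ∀ c : K, ∃ c' : K, D (C c) = C c')
    (DF : RatFunc K → RatFunc K)
    (hDFadd : ∀ f g : RatFunc K, DF (f + g) = DF f + DF g)
    (hDFmul : ∀ f g : RatFunc K, DF (f * g) = f * DF g + g * DF f)
    (hDFext : ∀ p : Polynomial K,
      DF (algebraMap (Polynomial K) (RatFunc K) p) =
        algebraMap (Polynomial K) (RatFunc K) (D p))
    (a b : Polynomial K) (hb : b.Monic) (hab : IsCoprime a b)
    (hnormal : ∀ p : Polynomial K, Irreducible p → 0 < p.degree → p ∣ b →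
      IsCoprime p (D p)) :
    ∃ (g : RatFunc K) (q a₁ b₁ : Polynomial K),
      b₁.Monic ∧ Squarefree b₁ ∧ b₁ ∣ b ∧ a₁.degree < b₁.degree ∧
      algebraMap (Polynomial K) (RatFunc K) a / algebraMap (Polynomial K) (RatFunc K) b =
        DF g + algebraMap (Polynomial K) (RatFunc K) q +
          algebraMap (Polynomial K) (RatFunc K) a₁ /
            algebraMap (Polynomial K) (RatFunc K) b₁ :=
  hermite_reduction_general D DF hDFadd hDFmul hDFext a b hb hnormal
end

section
/- Let K be a field and D a derivation on the polynomial ring K[t]. Let p ∈ K[t] be squarefree and nonconstant. Then p and Dp are coprime if and only if p has no nonconstant factor q ∈ K[t] with q dividing Dq (i.e., if and only if p has no nonconstant special factor). -/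
open Polynomial

/-- Let `K` be a field and `D` a derivation on `K[t]`. Let `p ∈ K[t]` be squarefree and
nonconstant. Then `p` and `Dp` are coprime (`p` is normal) if and only if `p` has no
nonconstant factor `q` with `q ∣ Dq` (i.e. no nonconstant special factor). -/
theorem squarefree_normal_iff_no_special_factor
    {K : Type} [Field K]
    (D : Polynomial K → Polynomial K)
    (hDadd : ∀ p q : Polynomial K, D (p + q) = D p + D q)
    (hDmul : ∀ p q : Polynomial K, D (p * q) = p * D q + q * D p)
    (p : Polynomial K) (hsf : Squarefree p) (hp : 0 < p.degree) :
    IsCoprime p (D p) ↔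
      ∀ q : Polynomial K, 0 < q.degree → q ∣ p → ¬ q ∣ D q := by
  classical
  have hp0 : p ≠ 0 := fun h => by simp [h] at hp
  constructor
  · intro hco q hq hqp hqDq
    obtain ⟨r, hr⟩ := hqp
    have hqDp : q ∣ D p := by
      rw [hr, hDmul]
      exact dvd_add (Dvd.intro _ rfl) (Dvd.dvd.mul_left hqDq r)
    have : IsUnit q := hco.isUnit_of_dvd' ⟨r, hr⟩ hqDp
    rw [Polynomial.isUnit_iff_degree_eq_zero] at this
    simp [this] at hq
  · intro h
    by_contra hnc
    set g := EuclideanDomain.gcd p (D p) with hg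
    have hgp : g ∣ p := EuclideanDomain.gcd_dvd_left _ _
    have hgD : g ∣ D p := EuclideanDomain.gcd_dvd_right _ _
    have hgu : ¬ IsUnit g := fun hu => hnc (EuclideanDomain.gcd_isUnit_iff.mp hu)
    have hg0 : g ≠ 0 := by
      rintro h0
      exact hp0 (by simpa [h0] using hgp)
    have hgdeg : 0 < g.degree := by
      rcases lt_or_eq_of_le (Polynomial.zero_le_degree_iff.mpr hg0) with h | h
      · exact h
      · exact absurd (Polynomial.isUnit_iff_degree_eq_zero.mpr h.symm) hgu
    obtain ⟨r, hr⟩ := hgp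
    -- g and r are coprime since p is squarefree
    have hcogr : IsCoprime g r := by
      rw [← EuclideanDomain.gcd_isUnit_iff]
      by_contra hu
      have hd : EuclideanDomain.gcd g r * EuclideanDomain.gcd g r ∣ p := by
        rw [hr]
        exact mul_dvd_mul (EuclideanDomain.gcd_dvd_left _ _)
          (EuclideanDomain.gcd_dvd_right _ _)
      exact hu (hsf _ hd)
    have hgDg : g ∣ D g := by
      have : g ∣ r * D g := by
        have h1 : g ∣ g * D r + r * D g := by rw [← hDmul, ← hr]; exact hgD
        have h2 : g ∣ g * D r := Dvd.intro _ rfl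
        simpa using (dvd_sub h1 h2)
      exact hcogr.dvd_of_dvd_mul_left this
    exact h g hgdeg ⟨r, hr⟩ hgDg
end

section
/- Splitting factorization: Let K be a field of characteristic zero and D a derivation on the polynomial ring K[t] mapping K into K. Then every monic polynomial b ∈ K[t] admits a unique factorization b = b_s · b_n into monic polynomials b_s, b_n ∈ K[t] such that b_s divides D(b_s) (b_s is special) and every nonconstant irreducible factor q of b_n satisfies that q and Dq are coprime (all irreducible factors of b_n are normal). Moreover b_s and b_n are coprime. -/
/-!
Group the monic irreducible factors of `b` into the special ones, whose product is `b_s`, and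
the others, whose product is `b_n`. Everything rests on one fact: a prime factor `p` of a
special `a` is itself special. Indeed, if `a = p ^ (m + 1) * r` with `p ∤ r`, the Leibniz rule
turns `p ^ (m + 1) ∣ D a` into `p ∣ (m + 1) * r * D p`, and `m + 1` is a unit in characteristic
zero. Hence a special polynomial and a polynomial with only normal irreducible factors have no
common irreducible factor, so they are coprime. Coprimality gives uniqueness: if
`b_s * b_n = b_s' * b_n'`, then `b_s ∣ b_s' * b_n'` with `b_s` coprime to `b_n'`, so
`b_s ∣ b_s'`, and symmetrically.
-/

open Polynomial UniqueFactorizationMonoid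

section Leibniz

variable {R : Type*}

theorem leibniz_one [CommRing R] {D : R → R}
    (hD : ∀ p q : R, D (p * q) = p * D q + q * D p) : D 1 = 0 := by
  simpa using hD 1 1

theorem leibniz_pow_succ [CommRing R] {D : R → R}
    (hD : ∀ p q : R, D (p * q) = p * D q + q * D p) (q : R) (n : ℕ) :
    D (q ^ (n + 1)) = ((n : R) + 1) * q ^ n * D q := by
  induction n with
  | zero => simp
  | succ m ih =>
    rw [pow_succ', hD, ih]
    push_cast
    ring

theorem Multiset.prod_dvd_leibniz [CommRing R] {D : R → R}
    (hD : ∀ p q : R, D (p * q) = p * D q + q * D p) (s : Multiset R)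
    (hs : ∀ q ∈ s, q ∣ D q) : s.prod ∣ D s.prod :=
  Multiset.prod_induction (fun a => a ∣ D a) s
    (fun a b ha hb =>
      hD a b ▸ dvd_add (mul_dvd_mul_left a hb) (mul_comm a b ▸ mul_dvd_mul_left b ha))
    (by rw [leibniz_one hD]; exact dvd_zero 1) hs

theorem Associated.dvd_leibniz [CommRing R] {D : R → R}
    (hD : ∀ p q : R, D (p * q) = p * D q + q * D p) {a b : R} (hab : Associated a b)
    (ha : a ∣ D a) : b ∣ D b := by
  obtain ⟨u, rfl⟩ := hab
  refine (Units.mul_right_dvd).mpr ?_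
  rw [hD]
  exact dvd_add (dvd_mul_right a _) (dvd_mul_of_dvd_right ha _)

theorem Prime.dvd_leibniz_of_dvd [CommRing R] [IsDomain R] [WfDvdMonoid R] [Algebra ℚ R]
    {D : R → R} (hD : ∀ p q : R, D (p * q) = p * D q + q * D p) {p a : R} (hp : Prime p)
    (ha₀ : a ≠ 0) (ha : a ∣ D a) (hpa : p ∣ a) : p ∣ D p := by
  obtain ⟨r, hr, hpr⟩ :=
    (FiniteMultiplicity.of_prime_left hp ha₀).exists_eq_pow_mul_and_not_dvd
  obtain ⟨m, hm⟩ : ∃ m, multiplicity p a = m + 1 :=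
    Nat.exists_eq_add_one.mpr (multiplicity_pos_of_dvd hpa)
  rw [hm] at hr
  have hDa : D a = p ^ (m + 1) * D r + p ^ m * (r * (((m : R) + 1) * D p)) := by
    rw [hr, hD, leibniz_pow_succ hD]
    ring
  have hpow : p ^ m * p ∣ p ^ m * (r * (((m : R) + 1) * D p)) := by
    rw [← pow_succ, ← (dvd_add_right (dvd_mul_right _ _)), ← hDa]
    exact (Dvd.intro r hr.symm).trans ha
  have hunit : IsUnit ((m : R) + 1) := by
    simpa using (IsUnit.mk0 ((m : ℚ) + 1) (Nat.cast_add_one_ne_zero m)).map (algebraMap ℚ R)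
  rcases hp.dvd_or_dvd ((mul_dvd_mul_iff_left (pow_ne_zero m hp.ne_zero)).mp hpow) with h | h
  · exact absurd h hpr
  · exact (hp.dvd_or_dvd h).resolve_left fun h' => hp.not_isUnit (isUnit_of_dvd_unit h' hunit)

theorem isCoprime_of_dvd_leibniz_of_forall_irreducible [CommRing R] [IsDomain R]
    [IsPrincipalIdealRing R] [Algebra ℚ R] {D : R → R}
    (hD : ∀ p q : R, D (p * q) = p * D q + q * D p) {a b : R} (ha₀ : a ≠ 0) (ha : a ∣ D a)
    (hb : ∀ q : R, Irreducible q → q ∣ b → IsCoprime q (D q)) : IsCoprime a b := by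
  refine isCoprime_of_dvd a b (fun h => ha₀ h.1) fun z hz hz₀ hza hzb => ?_
  obtain ⟨q, hq, hqz⟩ := WfDvdMonoid.exists_irreducible_factor hz hz₀
  have hspecial : q ∣ D q := hq.prime.dvd_leibniz_of_dvd hD ha₀ ha (hqz.trans hza)
  exact hq.not_isUnit ((hb q hq (hqz.trans hzb)).isUnit_of_dvd' dvd_rfl hspecial)

theorem dvd_of_mul_eq_of_dvd_leibniz [CommRing R] [IsDomain R] [IsPrincipalIdealRing R]
    [Algebra ℚ R] {D : R → R} (hD : ∀ p q : R, D (p * q) = p * D q + q * D p)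
    {a b a' b' : R} (h : a * b = a' * b') (ha₀ : a ≠ 0) (ha : a ∣ D a)
    (hb' : ∀ q : R, Irreducible q → q ∣ b' → IsCoprime q (D q)) : a ∣ a' :=
  (isCoprime_of_dvd_leibniz_of_forall_irreducible hD ha₀ ha hb').dvd_of_dvd_mul_right
    (h ▸ dvd_mul_right a b)

end Leibniz

theorem Polynomial.exists_monic_special_mul_normal {K : Type*} [Field K]
    {D : K[X] → K[X]} (hD : ∀ p q : K[X], D (p * q) = p * D q + q * D p) {b : K[X]}
    (hb : b.Monic) :
    ∃ bs bn : K[X], bs.Monic ∧ bn.Monic ∧ b = bs * bn ∧ bs ∣ D bs ∧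
      ∀ q : K[X], Irreducible q → q ∣ bn → IsCoprime q (D q) := by
  classical
  set S := normalizedFactors b
  have hS : ∀ q ∈ S, Irreducible q ∧ q.Monic ∧ q ∣ b := fun q =>
    (Polynomial.mem_normalizedFactors_iff hb.ne_zero).mp
  have hmonic : ∀ T ≤ S, T.prod.Monic := fun T hT => by
    simpa using monic_multiset_prod_of_monic T id fun q hq => (hS q (Multiset.mem_of_le hT hq)).2.1
  refine ⟨(S.filter fun q => q ∣ D q).prod, (S.filter fun q => ¬q ∣ D q).prod,
    hmonic _ (Multiset.filter_le _ _), hmonic _ (Multiset.filter_le _ _), ?_,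
    Multiset.prod_dvd_leibniz hD _ fun q hq => (Multiset.mem_filter.mp hq).2, ?_⟩
  · rw [← Multiset.prod_add, Multiset.filter_add_not]
    simpa [hb.leadingCoeff] using (leadingCoeff_mul_prod_normalizedFactors b).symm
  · intro q hq hqbn
    obtain ⟨r, hr, hqr⟩ := hq.prime.exists_mem_multiset_dvd hqbn
    obtain ⟨hrS, hr_normal⟩ := Multiset.mem_filter.mp hr
    have hqr : Associated q r := hq.associated_of_dvd (hS r hrS).1 hqr
    exact hq.coprime_iff_not_dvd.mpr fun hq_special => hr_normal (hqr.dvd_leibniz hD hq_special)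

theorem splitting_factorization_general
    {K : Type} [Field K] [CharZero K]
    (D : Polynomial K → Polynomial K)
    (hDmul : ∀ p q : Polynomial K, D (p * q) = p * D q + q * D p)
    (b : Polynomial K) (hb : b.Monic) :
    (∃! bsn : Polynomial K × Polynomial K,
      bsn.1.Monic ∧ bsn.2.Monic ∧ b = bsn.1 * bsn.2 ∧ bsn.1 ∣ D bsn.1 ∧
      ∀ q : Polynomial K, Irreducible q → 0 < q.degree → q ∣ bsn.2 →
        IsCoprime q (D q)) ∧
    (∀ bs bn : Polynomial K, bs.Monic → bn.Monic → b = bs * bn → bs ∣ D bs →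
      (∀ q : Polynomial K, Irreducible q → 0 < q.degree → q ∣ bn →
        IsCoprime q (D q)) →
      IsCoprime bs bn) := by
  have hnormal {bn : K[X]}
      (h : ∀ q : K[X], Irreducible q → 0 < q.degree → q ∣ bn → IsCoprime q (D q)) :
      ∀ q : K[X], Irreducible q → q ∣ bn → IsCoprime q (D q) :=
    fun q hq => h q hq (degree_pos_of_irreducible hq)
  obtain ⟨bs, bn, hbs, hbn, hb_eq, hs, hn⟩ := exists_monic_special_mul_normal hDmul hb
  refine ⟨⟨(bs, bn), ⟨hbs, hbn, hb_eq, hs, fun q hq _ => hn q hq⟩, ?_⟩,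
    fun bs' bn' hbs' _ _ hs' hn' =>
      isCoprime_of_dvd_leibniz_of_forall_irreducible hDmul hbs'.ne_zero hs' (hnormal hn')⟩
  rintro ⟨bs', bn'⟩ ⟨hbs', -, hb_eq', hs', hn'⟩
  have hdvd : bs' ∣ bs :=
    dvd_of_mul_eq_of_dvd_leibniz hDmul (hb_eq'.symm.trans hb_eq) hbs'.ne_zero hs' hn
  have hdvd' : bs ∣ bs' :=
    dvd_of_mul_eq_of_dvd_leibniz hDmul (hb_eq.symm.trans hb_eq') hbs.ne_zero hs (hnormal hn')
  have hbs_eq : bs' = bs := eq_of_monic_of_associated hbs' hbs (associated_of_dvd_dvd hdvd hdvd')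
  subst hbs_eq
  exact Prod.ext rfl (mul_left_cancel₀ hbs.ne_zero (hb_eq'.symm.trans hb_eq))

/-- **Splitting factorization.**
Let `K` be a field of characteristic zero and `D` a derivation on `K[t]` mapping `K`
into `K`. Every monic `b ∈ K[t]` admits a unique factorization `b = b_s · b_n` into
monic polynomials such that `b_s` is special (`b_s ∣ D b_s`) and every nonconstant
irreducible factor `q` of `b_n` is normal (`q` and `Dq` coprime). Moreover any such
`b_s` and `b_n` are coprime. -/
theorem splitting_factorization
    {K : Type} [Field K] [CharZero K]
    (D : Polynomial K → Polynomial K)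
    (hDadd : ∀ p q : Polynomial K, D (p + q) = D p + D q)
    (hDmul : ∀ p q : Polynomial K, D (p * q) = p * D q + q * D p)
    (hDK : ∀ c : K, ∃ c' : K, D (C c) = C c')
    (b : Polynomial K) (hb : b.Monic) :
    (∃! bsn : Polynomial K × Polynomial K,
      bsn.1.Monic ∧ bsn.2.Monic ∧ b = bsn.1 * bsn.2 ∧ bsn.1 ∣ D bsn.1 ∧
      ∀ q : Polynomial K, Irreducible q → 0 < q.degree → q ∣ bsn.2 →
        IsCoprime q (D q)) ∧
    (∀ bs bn : Polynomial K, bs.Monic → bn.Monic → b = bs * bn → bs ∣ D bs →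
      (∀ q : Polynomial K, Irreducible q → 0 < q.degree → q ∣ bn →
        IsCoprime q (D q)) →
      IsCoprime bs bn) :=
  splitting_factorization_general D hDmul b hb
end

section
/- Let (K, D) be a differential field of characteristic zero, let t be transcendental over K, and extend D to the polynomial ring K[t] by D(t) = w for some w ∈ K (t is a primitive monomial). If there is no u ∈ K with D(u) = w, then no nonconstant polynomial p ∈ K[t] divides Dp; equivalently, every nonconstant polynomial in K[t] has no nonconstant special factor and every squarefree polynomial in K[t] is normal. -/
/-!
Since `D t = w ∈ K`, the derivation does not raise degrees, and on a monic
`p = t ^ n + a t ^ (n - 1) + ⋯` it lowers them; so `p ∣ D p` forces `D p = 0`, and the coefficient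
of `t ^ (n - 1)` then reads `d a + n w = 0`, making `-a / n` an antiderivative of `w`.
For squarefree `p = r s` with `r` irreducible, `r ∣ D p = r D s + s D r` gives `r ∣ s D r`, and
`r ∤ s`, so an irreducible common factor of `p` and `D p` would be special.
-/

open Polynomial

section Squarefree

variable {R₀ R : Type*} [CommSemiring R₀] [CommRing R] [Algebra R₀ R]

theorem Associated.dvd_derivation_apply (δ : Derivation R₀ R R) {p q : R} (hpq : Associated p q)
    (hp : p ∣ δ p) : q ∣ δ q := by
  obtain ⟨u, rfl⟩ := hpq
  have hqp : p * u ∣ p := (Associated.symm ⟨u, rfl⟩).dvd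
  rw [Derivation.leibniz, smul_eq_mul, smul_eq_mul]
  exact dvd_add (hqp.mul_right _) ((hqp.trans hp).mul_left _)

theorem Derivation.isCoprime_apply_of_squarefree [IsDomain R] [IsPrincipalIdealRing R]
    (δ : Derivation R₀ R R) (h : ∀ r, Irreducible r → ¬ r ∣ δ r) {p : R} (hp : Squarefree p) :
    IsCoprime p (δ p) := by
  refine isCoprime_of_irreducible_dvd (fun h0 => not_squarefree_zero (h0.1 ▸ hp)) ?_
  rintro r hr ⟨s, rfl⟩ hrδ
  rw [Derivation.leibniz, smul_eq_mul, smul_eq_mul] at hrδ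
  rcases hr.prime.dvd_or_dvd ((dvd_add_right (dvd_mul_right r _)).mp hrδ) with hs | hδ
  · exact hr.not_isUnit (hp r (mul_dvd_mul_left r hs))
  · exact h r hr hδ

end Squarefree

namespace Polynomial

variable {K : Type*} [Field K] (δ : Derivation ℤ K[X] K[X]) {d : K → K} {w : K}

theorem map_add_of_derivation_apply_C (hC : ∀ c, δ (C c) = C (d c)) (a b : K) :
    d (a + b) = d a + d b :=
  C_injective (by rw [C_add, ← hC, ← hC, ← hC, C_add, map_add])

theorem map_zero_of_derivation_apply_C (hC : ∀ c, δ (C c) = C (d c)) : d 0 = 0 :=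
  C_injective (by rw [← hC, C_0, map_zero])

theorem map_one_of_derivation_apply_C (hC : ∀ c, δ (C c) = C (d c)) : d 1 = 0 :=
  C_injective (by rw [← hC, C_1, Derivation.map_one_eq_zero, C_0])

theorem map_zsmul_of_derivation_apply_C (hC : ∀ c, δ (C c) = C (d c)) (n : ℤ) (a : K) :
    d (n • a) = n • d a :=
  C_injective (by rw [← hC, map_zsmul, map_zsmul, map_zsmul, hC])

theorem derivation_apply_X_pow (hX : δ X = C w) (n : ℕ) :
    δ (X ^ n) = C w * derivative (X ^ n) := by
  rw [Derivation.leibniz_pow, hX, derivative_X_pow, nsmul_eq_mul, smul_eq_mul, C_eq_natCast]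
  ring

theorem derivation_apply_monomial (hC : ∀ c, δ (C c) = C (d c)) (hX : δ X = C w) (n : ℕ) (a : K) :
    δ (monomial n a) = monomial n (d a) + C w * derivative (monomial n a) := by
  rw [← C_mul_X_pow_eq_monomial, ← C_mul_X_pow_eq_monomial, Derivation.leibniz, smul_eq_mul,
    smul_eq_mul, derivation_apply_X_pow δ hX, hC, derivative_C_mul]
  ring

theorem coeff_derivation_apply (hC : ∀ c, δ (C c) = C (d c)) (hX : δ X = C w) (p : K[X]) (k : ℕ) :
    (δ p).coeff k = d (p.coeff k) + w * (derivative p).coeff k := by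
  induction p using Polynomial.induction_on' with
  | add p q hp hq =>
    rw [map_add, coeff_add, hp, hq, coeff_add, derivative_add, coeff_add,
      map_add_of_derivation_apply_C δ hC]
    ring
  | monomial n a =>
    rw [derivation_apply_monomial δ hC hX, coeff_add, coeff_C_mul, coeff_monomial, coeff_monomial]
    split_ifs <;> simp [map_zero_of_derivation_apply_C δ hC]

theorem degree_derivation_apply_lt_of_monic (hC : ∀ c, δ (C c) = C (d c)) (hX : δ X = C w)
    {p : K[X]} (hp : p.Monic) : (δ p).degree < p.degree := by
  rw [degree_eq_natDegree hp.ne_zero, degree_lt_iff_coeff_zero]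
  intro m hm
  rw [coeff_derivation_apply δ hC hX, coeff_derivative,
    coeff_eq_zero_of_natDegree_lt (by omega : p.natDegree < m + 1), zero_mul, mul_zero, add_zero]
  rcases hm.eq_or_lt with rfl | hlt
  · rw [hp.coeff_natDegree, map_one_of_derivation_apply_C δ hC]
  · rw [coeff_eq_zero_of_natDegree_lt hlt, map_zero_of_derivation_apply_C δ hC]

theorem coeff_derivation_apply_natDegree_sub_one (hC : ∀ c, δ (C c) = C (d c)) (hX : δ X = C w)
    {p : K[X]} (hp : p.Monic) (hdeg : 0 < p.natDegree) :
    (δ p).coeff (p.natDegree - 1) = d (p.coeff (p.natDegree - 1)) + w * p.natDegree := by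
  rw [coeff_derivation_apply δ hC hX, coeff_derivative, Nat.sub_add_cancel hdeg,
    hp.coeff_natDegree, Nat.cast_sub hdeg]
  ring

theorem exists_map_eq_of_monic_of_dvd_derivation_apply [CharZero K] (hC : ∀ c, δ (C c) = C (d c))
    (hX : δ X = C w) {p : K[X]} (hp : p.Monic) (hdeg : 0 < p.natDegree) (hdvd : p ∣ δ p) :
    ∃ u, d u = w := by
  have hδp : δ p = 0 :=
    eq_zero_of_dvd_of_degree_lt hdvd (degree_derivation_apply_lt_of_monic δ hC hX hp)
  set n := p.natDegree
  set a := p.coeff (n - 1)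
  have hda : d a = -(n * w) := by
    have h := coeff_derivation_apply_natDegree_sub_one δ hC hX hp hdeg
    rw [hδp, coeff_zero] at h
    linear_combination -h
  have hn : (n : K) ≠ 0 := Nat.cast_ne_zero.mpr hdeg.ne'
  have ha : a = (-n : ℤ) • -(a / n) := by
    rw [zsmul_eq_mul]
    push_cast
    field_simp
  refine ⟨-(a / n), mul_left_cancel₀ hn ?_⟩
  have h := map_zsmul_of_derivation_apply_C δ hC (-n) (-(a / n))
  rw [← ha, hda, zsmul_eq_mul] at h
  push_cast at h
  linear_combination h

theorem exists_map_eq_of_dvd_derivation_apply [CharZero K] (hC : ∀ c, δ (C c) = C (d c))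
    (hX : δ X = C w) {p : K[X]} (hp : 0 < p.degree) (hdvd : p ∣ δ p) : ∃ u, d u = w := by
  classical
  have hp0 : p ≠ 0 := ne_zero_of_degree_gt hp
  refine exists_map_eq_of_monic_of_dvd_derivation_apply δ hC hX (monic_normalize hp0) ?_
    ((associated_normalize p).dvd_derivation_apply δ hdvd)
  rwa [natDegree_pos_iff_degree_pos, degree_normalize]

end Polynomial

theorem primitive_case_no_special_general
    {K : Type} [Field K] [CharZero K]
    (d : K → K)
    (D : Polynomial K → Polynomial K)
    (hDadd : ∀ p q : Polynomial K, D (p + q) = D p + D q)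
    (hDmul : ∀ p q : Polynomial K, D (p * q) = p * D q + q * D p)
    (hDC : ∀ c : K, D (C c) = C (d c))
    (w : K) (hDX : D X = C w)
    (hnow : ¬ ∃ u : K, d u = w) :
    (∀ p : Polynomial K, 0 < p.degree → ¬ p ∣ D p) ∧
    (∀ p : Polynomial K, 0 < p.degree →
      ∀ q : Polynomial K, 0 < q.degree → q ∣ p → ¬ q ∣ D q) ∧
    (∀ p : Polynomial K, Squarefree p → IsCoprime p (D p)) := by
  let δ : Derivation ℤ K[X] K[X] := Derivation.mk' (AddMonoidHom.mk' D hDadd).toIntLinearMap hDmul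
  have no_special (p : K[X]) (hp : 0 < p.degree) : ¬ p ∣ D p := fun hdvd =>
    hnow (exists_map_eq_of_dvd_derivation_apply δ hDC hDX hp hdvd)
  refine ⟨no_special, fun _ _ q hq _ => no_special q hq, fun p hp => ?_⟩
  exact δ.isCoprime_apply_of_squarefree
    (fun r hr => no_special r (degree_pos_of_irreducible hr)) hp

/-- Let `(K, d)` be a differential field of characteristic zero, `t` transcendental
over `K` (so `K[t]` is modeled by `Polynomial K` with `t = X`), and extend `d` to a
derivation `D` on `K[t]` with `D t = w` for some `w ∈ K` (`t` is a primitive monomial).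
If there is no `u ∈ K` with `d u = w`, then no nonconstant `p ∈ K[t]` divides `Dp`;
equivalently, every nonconstant polynomial has no nonconstant special factor and every
squarefree polynomial is normal. -/
theorem primitive_case_no_special
    {K : Type} [Field K] [CharZero K]
    (d : K → K)
    (hdadd : ∀ a b : K, d (a + b) = d a + d b)
    (hdmul : ∀ a b : K, d (a * b) = a * d b + b * d a)
    (D : Polynomial K → Polynomial K)
    (hDadd : ∀ p q : Polynomial K, D (p + q) = D p + D q)
    (hDmul : ∀ p q : Polynomial K, D (p * q) = p * D q + q * D p)
    (hDC : ∀ c : K, D (C c) = C (d c))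
    (w : K) (hDX : D X = C w)
    (hnow : ¬ ∃ u : K, d u = w) :
    (∀ p : Polynomial K, 0 < p.degree → ¬ p ∣ D p) ∧
    (∀ p : Polynomial K, 0 < p.degree →
      ∀ q : Polynomial K, 0 < q.degree → q ∣ p → ¬ q ∣ D q) ∧
    (∀ p : Polynomial K, Squarefree p → IsCoprime p (D p)) :=
  primitive_case_no_special_general d D hDadd hDmul hDC w hDX hnow
end

section
/- Let (K, D) be a differential field of characteristic zero, let t be transcendental over K, and extend D to the polynomial ring K[t] by D(t) = a·t for some a ∈ K (t is a hyperexponential monomial). Assume that for every nonzero integer n there is no nonzero u ∈ K with D(u) = n·a·u. Then a monic polynomial p ∈ K[t] divides Dp if and only if p = t^k for some k ∈ ℕ; in other words, the monic special polynomials are exactly the powers of t. -/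
/-!
`D` acts diagonally on the monomial basis, `D (c tⁱ) = (d c + i a c) tⁱ`, so `deg D p ≤ deg p`.
If a monic `p` of degree `n` divides `D p`, the quotient is therefore a constant, which comparing
`tⁿ`-coefficients shows to be `n a`. The `tʲ`-coefficient `u` of `p` then solves
`d u = (n - j) a u`, so it vanishes for `j ≠ n`, and `p = tⁿ`.
-/

open Polynomial

namespace HyperexponentialMonomial

section Ring

variable {R : Type*} [Ring R] {D : R → R}

theorem map_one_eq_zero (hDmul : ∀ x y, D (x * y) = x * D y + y * D x) : D 1 = 0 := by
  simpa using hDmul 1 1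

end Ring

variable {R : Type*} [CommRing R] {d : R → R} {D : R[X] → R[X]} {a : R}

theorem D_X_pow (hDmul : ∀ p q, D (p * q) = p * D q + q * D p) (hDX : D X = C a * X) (k : ℕ) :
    D (X ^ k) = C (k * a) * X ^ k := by
  induction k with
  | zero => simp [map_one_eq_zero hDmul]
  | succ k ih =>
    rw [pow_succ, hDmul, ih, hDX, Nat.cast_succ, add_one_mul, map_add]
    ring

theorem D_C_mul_X_pow (hDmul : ∀ p q, D (p * q) = p * D q + q * D p)
    (hDC : ∀ c, D (C c) = C (d c)) (hDX : D X = C a * X) (c : R) (i : ℕ) :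
    D (C c * X ^ i) = C (d c + i * a * c) * X ^ i := by
  rw [hDmul, D_X_pow hDmul hDX, hDC]
  simp only [map_add, map_mul]
  ring

theorem d_zero (hDadd : ∀ p q, D (p + q) = D p + D q) (hDC : ∀ c, D (C c) = C (d c)) :
    d 0 = 0 :=
  C_injective <| by
    rw [← hDC, map_zero]
    exact map_zero (AddMonoidHom.mk' D hDadd)

theorem d_one (hDmul : ∀ p q, D (p * q) = p * D q + q * D p) (hDC : ∀ c, D (C c) = C (d c)) :
    d 1 = 0 :=
  C_injective <| by rw [← hDC, map_one, map_zero, map_one_eq_zero hDmul]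

theorem coeff_D (hDadd : ∀ p q, D (p + q) = D p + D q)
    (hDmul : ∀ p q, D (p * q) = p * D q + q * D p) (hDC : ∀ c, D (C c) = C (d c))
    (hDX : D X = C a * X) (p : R[X]) (j : ℕ) :
    (D p).coeff j = d (p.coeff j) + j * a * p.coeff j := by
  have hD : (D p).coeff j = ∑ i ∈ Finset.range (p.natDegree + 1),
      (C (d (p.coeff i) + i * a * p.coeff i) * X ^ i).coeff j := by
    conv_lhs => rw [p.as_sum_range_C_mul_X_pow]
    rw [← AddMonoidHom.mk'_apply D hDadd, map_sum, finsetSum_coeff]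
    simp only [AddMonoidHom.mk'_apply, D_C_mul_X_pow hDmul hDC hDX]
  simp only [hD, coeff_C_mul_X_pow, Finset.sum_ite_eq, Finset.mem_range]
  split_ifs with hj
  · rfl
  · rw [coeff_eq_zero_of_natDegree_lt (by omega), d_zero hDadd hDC, mul_zero, add_zero]

theorem natDegree_D_le (hDadd : ∀ p q, D (p + q) = D p + D q)
    (hDmul : ∀ p q, D (p * q) = p * D q + q * D p) (hDC : ∀ c, D (C c) = C (d c))
    (hDX : D X = C a * X) (p : R[X]) : (D p).natDegree ≤ p.natDegree :=
  natDegree_le_iff_coeff_eq_zero.mpr fun j hj => by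
    rw [coeff_D hDadd hDmul hDC hDX, coeff_eq_zero_of_natDegree_lt (by exact_mod_cast hj),
      d_zero hDadd hDC, mul_zero, add_zero]

theorem eq_X_pow_of_dvd_D (hDadd : ∀ p q, D (p + q) = D p + D q)
    (hDmul : ∀ p q, D (p * q) = p * D q + q * D p) (hDC : ∀ c, D (C c) = C (d c))
    (hDX : D X = C a * X)
    (hnosol : ∀ n : ℤ, n ≠ 0 → ∀ u : R, u ≠ 0 → d u ≠ n * a * u)
    {p : R[X]} (hp : p.Monic) (hdvd : p ∣ D p) : p = X ^ p.natDegree := by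
  set n := p.natDegree
  have hcoeff := coeff_D hDadd hDmul hDC hDX p
  have hlc : p.coeff n = 1 := hp.coeff_natDegree
  have heigen : D p = C (n * a) * p := by
    have h := eq_leadingCoeff_mul_of_monic_of_dvd_of_natDegree_le hp hdvd
      (natDegree_D_le hDadd hDmul hDC hDX p)
    have hlead : (D p).leadingCoeff = n * a := by
      simpa [coeff_C_mul, hlc, hcoeff, d_one hDmul hDC] using
        (congrArg (coeff · n) h).symm
    rwa [hlead] at h
  have hzero : ∀ j ≠ n, p.coeff j = 0 := by
    intro j hj
    by_contra hc
    refine hnosol (n - j) (by omega) _ hc ?_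
    have := hcoeff j
    rw [heigen, coeff_C_mul] at this
    push_cast
    linear_combination -this
  ext j
  rw [coeff_X_pow]
  split_ifs with hj
  · rw [hj, hlc]
  · exact hzero j hj

end HyperexponentialMonomial

theorem hyperexponential_special_iff_power_general
    {K : Type} [Field K]
    (d : K → K)
    (D : Polynomial K → Polynomial K)
    (hDadd : ∀ p q : Polynomial K, D (p + q) = D p + D q)
    (hDmul : ∀ p q : Polynomial K, D (p * q) = p * D q + q * D p)
    (hDC : ∀ c : K, D (C c) = C (d c))
    (a : K) (hDX : D X = C a * X)
    (hnosol : ∀ n : ℤ, n ≠ 0 → ∀ u : K, u ≠ 0 → d u ≠ (n : K) * a * u)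
    (p : Polynomial K) (hp : p.Monic) :
    p ∣ D p ↔ ∃ k : ℕ, p = X ^ k := by
  constructor
  · exact fun hdvd =>
      ⟨_, HyperexponentialMonomial.eq_X_pow_of_dvd_D hDadd hDmul hDC hDX hnosol hp hdvd⟩
  · rintro ⟨k, rfl⟩
    rw [HyperexponentialMonomial.D_X_pow hDmul hDX]
    exact dvd_mul_left _ _

/-- Let `(K, d)` be a differential field of characteristic zero, `t` transcendental
over `K` (so `K[t]` is modeled by `Polynomial K` with `t = X`), and extend `d` to a
derivation `D` on `K[t]` with `D t = a·t` for some `a ∈ K` (`t` is a hyperexponential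
monomial). Assume for every nonzero integer `n` there is no nonzero `u ∈ K` with
`d u = n·a·u`. Then a monic `p ∈ K[t]` divides `Dp` if and only if `p = t^k` for some
`k ∈ ℕ`: the monic special polynomials are exactly the powers of `t`. -/
theorem hyperexponential_special_iff_power
    {K : Type} [Field K] [CharZero K]
    (d : K → K)
    (hdadd : ∀ x y : K, d (x + y) = d x + d y)
    (hdmul : ∀ x y : K, d (x * y) = x * d y + y * d x)
    (D : Polynomial K → Polynomial K)
    (hDadd : ∀ p q : Polynomial K, D (p + q) = D p + D q)
    (hDmul : ∀ p q : Polynomial K, D (p * q) = p * D q + q * D p)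
    (hDC : ∀ c : K, D (C c) = C (d c))
    (a : K) (hDX : D X = C a * X)
    (hnosol : ∀ n : ℤ, n ≠ 0 → ∀ u : K, u ≠ 0 → d u ≠ (n : K) * a * u)
    (p : Polynomial K) (hp : p.Monic) :
    p ∣ D p ↔ ∃ k : ℕ, p = X ^ k :=
  hyperexponential_special_iff_power_general d D hDadd hDmul hDC a hDX hnosol p hp
end

section
/- Rothstein–Trager criterion: Let C be an algebraically closed field of characteristic zero, and let a, b ∈ C[x] with b squarefree and deg(b) ≥ 1. For every z₀ ∈ C, the resultant res_x(a − z₀·b′, b) is zero if and only if there exists β ∈ C with b(β) = 0 and a(β) − z₀·b′(β) = 0, where b′ denotes the formal derivative of b. In other words, the roots of the Rothstein–Trager resultant r(z) = res_x(a − z·b′, b) are exactly the residues a(β)/b′(β) of a/b at the roots β of b. -/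
open Polynomial

/-- The Sylvester matrix of two polynomials `f` and `g` (with respect to their actual
degrees `m = deg f` and `n = deg g`): a square matrix of size `n + m` whose first block
of `n` rows holds the shifted coefficient sequences of `f` and whose second block of
`m` rows holds the shifted coefficient sequences of `g`. -/
noncomputable def sylvesterMatrix {K : Type} [CommRing K] (f g : Polynomial K) :
    Matrix (Fin g.natDegree ⊕ Fin f.natDegree) (Fin g.natDegree ⊕ Fin f.natDegree) K :=
  Matrix.of fun i j =>
    let j' : ℕ := (finSumFinEquiv j : Fin (g.natDegree + f.natDegree))
    match i with
    | Sum.inl i =>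
        if (i : ℕ) ≤ j' ∧ j' ≤ (i : ℕ) + f.natDegree then
          f.coeff (f.natDegree + (i : ℕ) - j')
        else 0
    | Sum.inr i =>
        if (i : ℕ) ≤ j' ∧ j' ≤ (i : ℕ) + g.natDegree then
          g.coeff (g.natDegree + (i : ℕ) - j')
        else 0

/-- The resultant `res_x(f, g)`: the determinant of the Sylvester matrix of `f` and
`g`. -/
noncomputable def resultant {K : Type} [CommRing K] (f g : Polynomial K) : K :=
  (sylvesterMatrix f g).det

/-!
The Sylvester matrix above is Mathlib's `Polynomial.sylvester` transposed, with rows and columns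
permuted, so the two resultants vanish together. Over an algebraically closed field, and with
`b ≠ 0`, Mathlib's resultant of `a - z₀ b'` and `b` vanishes exactly when the two polynomials are
not coprime, that is, when they have a common root.
-/

theorem Matrix.det_submatrix_equiv_eq_zero_iff {m n R : Type*} [Fintype m] [DecidableEq m]
    [Fintype n] [DecidableEq n] [CommRing R] (A : Matrix m m R) (e₁ e₂ : n ≃ m) :
    (A.submatrix e₁ e₂).det = 0 ↔ A.det = 0 := by
  change (Matrix.reindex e₁.symm e₂.symm A).det = 0 ↔ _
  rw [Matrix.det_reindex]
  rcases Int.units_eq_one_or (Equiv.Perm.sign (e₂.symm.trans e₁)) with h | h <;> simp [h]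

theorem sylvesterMatrix_eq_submatrix_transpose_sylvester {K : Type} [CommRing K] (f g : K[X]) :
    sylvesterMatrix f g = (sylvester f g f.natDegree g.natDegree).transpose.submatrix
      ((Equiv.sumCongr Fin.revPerm Fin.revPerm).trans ((Equiv.sumComm _ _).trans finSumFinEquiv))
      (finSumFinEquiv.trans (Fin.revPerm.trans (finCongr (add_comm _ _)))) := by
  have hj := fun j : Fin g.natDegree ⊕ Fin f.natDegree => (finSumFinEquiv j).isLt
  ext (i | i) j <;>
  · simp only [sylvesterMatrix, sylvester, Matrix.of_apply, Matrix.submatrix_apply,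
      Matrix.transpose_apply, Equiv.trans_apply, Fin.revPerm_apply, finCongr_apply, Fin.val_cast,
      Fin.val_rev, Set.mem_Icc, tsub_le_iff_right, Equiv.sumCongr_apply, Sum.map_inl, Sum.map_inr,
      Equiv.sumComm_apply, Sum.swap_inl, Sum.swap_inr, finSumFinEquiv_apply_left,
      finSumFinEquiv_apply_right, Fin.addCases_left, Fin.addCases_right]
    exact if_congr (by grind) (by congr 1; grind) rfl

theorem resultant_eq_zero_iff_polynomial_resultant_eq_zero {K : Type} [CommRing K] (f g : K[X]) :
    _root_.resultant f g = 0 ↔ f.resultant g = 0 := by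
  rw [_root_.resultant, sylvesterMatrix_eq_submatrix_transpose_sylvester,
    Matrix.det_submatrix_equiv_eq_zero_iff, Matrix.det_transpose, Polynomial.resultant]

theorem resultant_eq_zero_iff_exists_common_root {K : Type} [Field K] [IsAlgClosed K]
    {f g : K[X]} (hg : g ≠ 0) :
    _root_.resultant f g = 0 ↔ ∃ β : K, f.eval β = 0 ∧ g.eval β = 0 := by
  rw [resultant_eq_zero_iff_polynomial_resultant_eq_zero, Polynomial.resultant_eq_zero_iff,
    isCoprime_iff_aeval_ne_zero_of_isAlgClosed K K f g]
  simp [hg]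

theorem rothstein_trager_criterion_general
    {C : Type} [Field C] [IsAlgClosed C]
    (a b : Polynomial C) (hdeg : 0 < b.degree) (z₀ : C) :
    _root_.resultant (a - Polynomial.C z₀ * derivative b) b = 0 ↔
      ∃ β : C, b.eval β = 0 ∧
        a.eval β - z₀ * (derivative b).eval β = 0 := by
  rw [resultant_eq_zero_iff_exists_common_root (ne_zero_of_degree_gt hdeg)]
  simp only [eval_sub, eval_mul, eval_C, and_comm]

/-- **Rothstein–Trager criterion.**
Let `C` be an algebraically closed field of characteristic zero and `a, b ∈ C[x]` with
`b` squarefree of degree `≥ 1`. For every `z₀ ∈ C`, the resultant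
`res_x(a − z₀·b′, b)` vanishes if and only if there is `β ∈ C` with `b(β) = 0` and
`a(β) − z₀·b′(β) = 0`: the roots of the Rothstein–Trager resultant
`r(z) = res_x(a − z·b′, b)` are exactly the residues `a(β)/b′(β)` of `a/b` at the
roots `β` of `b`. -/
theorem rothstein_trager_criterion
    {C : Type} [Field C] [CharZero C] [IsAlgClosed C]
    (a b : Polynomial C) (hb : Squarefree b) (hdeg : 0 < b.degree) (z₀ : C) :
    _root_.resultant (a - Polynomial.C z₀ * derivative b) b = 0 ↔
      ∃ β : C, b.eval β = 0 ∧
        a.eval β - z₀ * (derivative b).eval β = 0 :=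
  rothstein_trager_criterion_general a b hdeg z₀
end

section
/- The sum of d'Alembertian elements is d'Alembertian: Let (F, D) be a differential field of characteristic zero and K a subfield of F closed under D. Call an element y ∈ F d'Alembertian over K if there exist n ≥ 1 and r₁, …, r_n ∈ K such that (D − r_n)⋯(D − r₁)y = 0, where (D − r) denotes the map z ↦ D(z) − r·z. If t, u ∈ F are d'Alembertian over K, then t + u is d'Alembertian over K. -/
/-!
Induct on a list `r :: rs` annihilating `t`: since `(D - r)(t + u) = (D - r) t + (D - r) u`
and `(D - r) t` is killed by the shorter list `rs`, it suffices that `(D - r) u` is again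
d'Alembertian. For this, induct on a list `s :: ss` annihilating `u`, using the exchange rule
`(D - (s + g'/g)) (D - r) = (D - (s + g'/g - g)) (D - s)` for `g = s - r ≠ 0`, whose new
coefficients stay in `K` because `K` is closed under `D`.
-/

/-- Iterated application of the first-order linear differential operators `D − r` for
`r` running through the list `rs`: `applyOps D [r₁, …, rₙ] y = (D − rₙ)⋯(D − r₁) y`. -/
def applyOps {F : Type} [Field F] (D : F → F) : List F → F → F
  | [], y => y
  | r :: rs, y => applyOps D rs (D y - r * y)

/-- `y ∈ F` is d'Alembertian over the differential subfield `K` if there are `n ≥ 1`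
and `r₁, …, rₙ ∈ K` with `(D − rₙ)⋯(D − r₁) y = 0`. -/
def IsDAlembertian {F : Type} [Field F] (D : F → F) (K : Subfield F) (y : F) : Prop :=
  ∃ rs : List F, rs ≠ [] ∧ (∀ r ∈ rs, r ∈ K) ∧ applyOps D rs y = 0

section DAlembertian

variable {F : Type} [Field F] {D : F → F} {K : Subfield F}

theorem isDAlembertian_zero (hD0 : D 0 = 0) : IsDAlembertian D K 0 :=
  ⟨[0], List.cons_ne_nil _ _, by simp, by simp [applyOps, hD0]⟩

theorem IsDAlembertian.of_sub_mul {r y : F} (hr : r ∈ K)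
    (h : IsDAlembertian D K (D y - r * y)) : IsDAlembertian D K y := by
  obtain ⟨L, -, hL, hLy⟩ := h
  exact ⟨r :: L, List.cons_ne_nil _ _, by simpa [hr] using hL, hLy⟩

theorem isDAlembertian_of_applyOps_eq_zero (hD0 : D 0 = 0) {L : List F} (hL : ∀ r ∈ L, r ∈ K)
    {y : F} (h : applyOps D L y = 0) : IsDAlembertian D K y := by
  cases L with
  | nil => exact (show y = 0 from h) ▸ isDAlembertian_zero hD0
  | cons r rs => exact ⟨r :: rs, List.cons_ne_nil _ _, hL, h⟩

theorem sub_mul_exchange (hDadd : ∀ x y : F, D (x + y) = D x + D y)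
    (hDmul : ∀ x y : F, D (x * y) = x * D y + y * D x) {r s : F} (hrs : r ≠ s) (u : F) :
    D (D u - r * u) - (s + D (s - r) / (s - r)) * (D u - r * u) =
      D (D u - s * u) - (s + D (s - r) / (s - r) - (s - r)) * (D u - s * u) := by
  have hD_sub (a b : F) : D (a - b) = D a - D b := (AddMonoidHom.mk' D hDadd).map_sub a b
  have hlog : D (s - r) / (s - r) * (s - r) = D (s - r) :=
    div_mul_cancel₀ _ (sub_ne_zero.mpr hrs.symm)
  rw [hD_sub (D u), hD_sub (D u), hDmul r u, hDmul s u]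
  linear_combination (-u) * hlog + (-u) * hD_sub s r

theorem isDAlembertian_sub_mul_of_applyOps_eq_zero
    (hDadd : ∀ x y : F, D (x + y) = D x + D y)
    (hDmul : ∀ x y : F, D (x * y) = x * D y + y * D x) (hK : ∀ x ∈ K, D x ∈ K)
    {L : List F} (hL : ∀ r ∈ L, r ∈ K) {u : F} (hu : applyOps D L u = 0) {r : F} (hr : r ∈ K) :
    IsDAlembertian D K (D u - r * u) := by
  have hD0 : D 0 = 0 := (AddMonoidHom.mk' D hDadd).map_zero
  induction L generalizing u r with
  | nil =>
    rw [show u = 0 from hu, hD0, mul_zero, sub_zero]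
    exact isDAlembertian_zero hD0
  | cons s ss ih =>
    have hs : s ∈ K := hL s List.mem_cons_self
    have hss : ∀ x ∈ ss, x ∈ K := fun x hx => hL x (List.mem_cons_of_mem _ hx)
    rcases eq_or_ne r s with rfl | hrs
    · exact isDAlembertian_of_applyOps_eq_zero hD0 hss hu
    · have hg : s - r ∈ K := K.sub_mem hs hr
      have hc : s + D (s - r) / (s - r) ∈ K := K.add_mem hs (K.div_mem (hK _ hg) hg)
      refine IsDAlembertian.of_sub_mul hc ?_
      rw [sub_mul_exchange hDadd hDmul hrs]
      exact ih hss hu (K.sub_mem hc hg)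

theorem isDAlembertian_add_of_applyOps_eq_zero
    (hDadd : ∀ x y : F, D (x + y) = D x + D y)
    (hDmul : ∀ x y : F, D (x * y) = x * D y + y * D x) (hK : ∀ x ∈ K, D x ∈ K)
    {L : List F} (hL : ∀ r ∈ L, r ∈ K) {t : F} (ht : applyOps D L t = 0) {u : F}
    (hu : IsDAlembertian D K u) : IsDAlembertian D K (t + u) := by
  induction L generalizing t u with
  | nil => rwa [show t = 0 from ht, zero_add]
  | cons r rs ih =>
    have hr : r ∈ K := hL r List.mem_cons_self
    obtain ⟨M, -, hM, hMu⟩ := hu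
    have hDu : IsDAlembertian D K (D u - r * u) :=
      isDAlembertian_sub_mul_of_applyOps_eq_zero hDadd hDmul hK hM hMu hr
    refine IsDAlembertian.of_sub_mul hr ?_
    rw [show D (t + u) - r * (t + u) = (D t - r * t) + (D u - r * u) by rw [hDadd]; ring]
    exact ih (fun x hx => hL x (List.mem_cons_of_mem _ hx)) ht hDu

end DAlembertian

theorem dAlembertian_add_general
    {F : Type} [Field F]
    (D : F → F)
    (hDadd : ∀ x y : F, D (x + y) = D x + D y)
    (hDmul : ∀ x y : F, D (x * y) = x * D y + y * D x)
    (K : Subfield F) (hK : ∀ x ∈ K, D x ∈ K)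
    (t u : F)
    (ht : IsDAlembertian D K t) (hu : IsDAlembertian D K u) :
    IsDAlembertian D K (t + u) := by
  obtain ⟨L, -, hL, hLt⟩ := ht
  exact isDAlembertian_add_of_applyOps_eq_zero hDadd hDmul hK hL hLt hu

/-- **The sum of d'Alembertian elements is d'Alembertian.**
Let `(F, D)` be a differential field of characteristic zero and `K` a subfield of `F`
closed under `D`. If `t, u ∈ F` are d'Alembertian over `K`, then so is `t + u`. -/
theorem dAlembertian_add
    {F : Type} [Field F] [CharZero F]
    (D : F → F)
    (hDadd : ∀ x y : F, D (x + y) = D x + D y)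
    (hDmul : ∀ x y : F, D (x * y) = x * D y + y * D x)
    (K : Subfield F) (hK : ∀ x ∈ K, D x ∈ K)
    (t u : F)
    (ht : IsDAlembertian D K t) (hu : IsDAlembertian D K u) :
    IsDAlembertian D K (t + u) :=
  dAlembertian_add_general D hDadd hDmul K hK t u ht hu
end

section
/- The product of d'Alembertian elements is d'Alembertian: Let (F, D) be a differential field of characteristic zero and K a subfield of F closed under D. Call an element y ∈ F d'Alembertian over K if there exist n ≥ 1 and r₁, …, r_n ∈ K such that (D − r_n)⋯(D − r₁)y = 0, where (D − r) denotes the map z ↦ D(z) − r·z. If t, u ∈ F are d'Alembertian over K, then t·u is d'Alembertian over K. -/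
section Aux

variable {F : Type} [Field F] (D : F → F)

theorem applyOps_append (as bs : List F) (y : F) :
    applyOps D (as ++ bs) y = applyOps D bs (applyOps D as y) := by
  induction as generalizing y with
  | nil => rfl
  | cons a as ih => simp only [List.cons_append, applyOps]; exact ih _

variable (hDadd : ∀ x y : F, D (x + y) = D x + D y)
  (hDmul : ∀ x y : F, D (x * y) = x * D y + y * D x)
  (K : Subfield F) (hK : ∀ x ∈ K, D x ∈ K)

include hDadd

theorem D_zero' : D 0 = 0 := by
  have h : D 0 = D 0 + D 0 := by simpa using (hDadd 0 0).symm
  have := add_left_cancel (a := D 0) (b := (0 : F)) (c := D 0) (by rw [add_zero]; exact h)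
  exact this.symm

include hDmul hK

/-- Lemma A: applying `D - a` to an element annihilated by a factored operator
yields an element annihilated by a factored operator of no greater length. -/
theorem lemA : ∀ (ss : List F), (∀ r ∈ ss, r ∈ K) → ∀ z, applyOps D ss z = 0 →
    ∀ a ∈ K, ∃ ws : List F, (∀ w ∈ ws, w ∈ K) ∧ applyOps D ws (D z - a * z) = 0 := by
  intro ss
  induction ss with
  | nil =>
    intro _ z hz a _
    refine ⟨[], by simp, ?_⟩
    simp only [applyOps] at hz ⊢
    subst hz
    rw [D_zero' D hDadd]
    ring
  | cons s ss ih =>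
    intro hmem z hz a ha
    have hsK : s ∈ K := hmem s (by simp)
    have hssmem : ∀ r ∈ ss, r ∈ K := fun r hr => hmem r (by simp [hr])
    simp only [applyOps] at hz
    set z₁ : F := D z - s * z with hz₁
    by_cases hc : s - a = 0
    · -- a = s
      have : a = s := by linear_combination -hc
      subst this
      exact ⟨ss, hssmem, hz⟩
    · set c : F := s - a with hcdef
      have hcK : c ∈ K := sub_mem hsK ha
      have hDcK : D c ∈ K := hK c hcK
      set b : F := s + D c / c - c with hbdef
      have hbK : b ∈ K := sub_mem (add_mem hsK (div_mem hDcK hcK)) hcK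
      obtain ⟨ws', hws'mem, hws'⟩ := ih hssmem z₁ hz b hbK
      refine ⟨(s + D c / c) :: ws', ?_, ?_⟩
      · intro w hw
        rcases List.mem_cons.mp hw with h | h
        · subst h; exact add_mem hsK (div_mem hDcK hcK)
        · exact hws'mem w h
      · simp only [applyOps]
        have e1 : D z - a * z = z₁ + c * z := by rw [hz₁, hcdef]; ring
        have e2 : D (D z - a * z) = D z₁ + (c * D z + z * D c) := by
          rw [e1, hDadd, hDmul]
        have e3 : D z = z₁ + s * z := by rw [hz₁]; ring
        have key : D (D z - a * z) - (s + D c / c) * (D z - a * z) = D z₁ - b * z₁ := by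
          rw [e2, e1, e3, hbdef]
          field_simp
          ring
        rw [key]
        exact hws'
/-- Lemma B: the sum of two elements annihilated by factored operators is
annihilated by a factored operator. -/
theorem lemB : ∀ (rs : List F), (∀ r ∈ rs, r ∈ K) → ∀ (ss : List F), (∀ r ∈ ss, r ∈ K) →
    ∀ t u, applyOps D rs t = 0 → applyOps D ss u = 0 →
    ∃ ws : List F, (∀ w ∈ ws, w ∈ K) ∧ applyOps D ws (t + u) = 0 := by
  intro rs
  induction rs with
  | nil =>
    intro _ ss hss t u ht hu
    simp only [applyOps] at ht
    subst ht
    exact ⟨ss, hss, by rwa [zero_add]⟩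
  | cons r rs ih =>
    intro hmem ss hss t u ht hu
    have hrK : r ∈ K := hmem r (by simp)
    have hrsmem : ∀ x ∈ rs, x ∈ K := fun x hx => hmem x (by simp [hx])
    simp only [applyOps] at ht
    obtain ⟨wsu, hwsumem, hwsu⟩ := lemA D hDadd hDmul K hK ss hss u hu r hrK
    obtain ⟨ws', hws'mem, hws'⟩ := ih hrsmem wsu hwsumem (D t - r * t) (D u - r * u) ht hwsu
    refine ⟨r :: ws', ?_, ?_⟩
    · intro w hw
      rcases List.mem_cons.mp hw with h | h
      · subst h; exact hrK
      · exact hws'mem w h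
    · simp only [applyOps]
      have : D (t + u) - r * (t + u) = (D t - r * t) + (D u - r * u) := by
        rw [hDadd]; ring
      rw [this]
      exact hws'

/-- Lemma C: the product of two elements annihilated by factored operators is
annihilated by a factored operator. -/
theorem lemC : ∀ (n : ℕ) (rs ss : List F), rs.length + ss.length ≤ n →
    (∀ r ∈ rs, r ∈ K) → (∀ r ∈ ss, r ∈ K) →
    ∀ t u, applyOps D rs t = 0 → applyOps D ss u = 0 →
    ∃ ws : List F, (∀ w ∈ ws, w ∈ K) ∧ applyOps D ws (t * u) = 0 := by
  intro n
  induction n with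
  | zero =>
    intro rs ss hlen _ _ t u ht hu
    have hrs : rs = [] := List.length_eq_zero_iff.mp (by omega)
    subst hrs
    simp only [applyOps] at ht
    subst ht
    exact ⟨[], by simp, by simp [applyOps]⟩
  | succ n ihn =>
    intro rs ss hlen hrsmem hssmem t u ht hu
    match rs, ss with
    | [], ss =>
      simp only [applyOps] at ht
      subst ht
      exact ⟨[], by simp, by simp [applyOps]⟩
    | r :: rs', [] =>
      simp only [applyOps] at hu
      subst hu
      exact ⟨[], by simp, by simp [applyOps]⟩
    | r :: rs', s :: ss' =>
      have hrK : r ∈ K := hrsmem r (by simp)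
      have hsK : s ∈ K := hssmem s (by simp)
      have hrs'mem : ∀ x ∈ rs', x ∈ K := fun x hx => hrsmem x (by simp [hx])
      have hss'mem : ∀ x ∈ ss', x ∈ K := fun x hx => hssmem x (by simp [hx])
      simp only [applyOps] at ht hu
      set t₁ : F := D t - r * t with ht₁
      set u₁ : F := D u - s * u with hu₁
      have len1 : rs'.length + (s :: ss').length ≤ n := by
        simp only [List.length_cons] at hlen ⊢; omega
      have len2 : (r :: rs').length + ss'.length ≤ n := by
        simp only [List.length_cons] at hlen ⊢; omega
      obtain ⟨ws₁, hws₁mem, hws₁⟩ :=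
        ihn rs' (s :: ss') len1 hrs'mem hssmem t₁ u ht (by simp only [applyOps]; exact hu)
      obtain ⟨ws₂, hws₂mem, hws₂⟩ :=
        ihn (r :: rs') ss' len2 hrsmem hss'mem t u₁ (by simp only [applyOps]; exact ht) hu
      obtain ⟨ws₃, hws₃mem, hws₃⟩ :=
        lemB D hDadd hDmul K hK ws₁ hws₁mem ws₂ hws₂mem (t₁ * u) (t * u₁) hws₁ hws₂
      refine ⟨(r + s) :: ws₃, ?_, ?_⟩
      · intro w hw
        rcases List.mem_cons.mp hw with h | h
        · subst h; exact add_mem hrK hsK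
        · exact hws₃mem w h
      · simp only [applyOps]
        have : D (t * u) - (r + s) * (t * u) = t₁ * u + t * u₁ := by
          rw [hDmul, ht₁, hu₁]; ring
        rw [this]
        exact hws₃

end Aux

/-- **The product of d'Alembertian elements is d'Alembertian.**
Let `(F, D)` be a differential field of characteristic zero and `K` a subfield of `F`
closed under `D`. If `t, u ∈ F` are d'Alembertian over `K`, then so is `t·u`. -/
theorem dAlembertian_mul
    {F : Type} [Field F] [CharZero F]
    (D : F → F)
    (hDadd : ∀ x y : F, D (x + y) = D x + D y)
    (hDmul : ∀ x y : F, D (x * y) = x * D y + y * D x)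
    (K : Subfield F) (hK : ∀ x ∈ K, D x ∈ K)
    (t u : F)
    (ht : IsDAlembertian D K t) (hu : IsDAlembertian D K u) :
    IsDAlembertian D K (t * u) := by
  obtain ⟨rs, -, hrsmem, hrs⟩ := ht
  obtain ⟨ss, -, hssmem, hss⟩ := hu
  obtain ⟨ws, hwsmem, hws⟩ :=
    lemC D hDadd hDmul K hK (rs.length + ss.length) rs ss le_rfl hrsmem hssmem t u hrs hss
  refine ⟨ws ++ [0], by simp, ?_, ?_⟩
  · intro w hw
    rcases List.mem_append.mp hw with h | h
    · exact hwsmem w h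
    · simp only [List.mem_singleton] at h; subst h; exact zero_mem K
  · rw [applyOps_append, hws]
    simp only [applyOps]
    rw [D_zero' D hDadd]
    ring
end
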